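/- arXiv:2209.10842 — 2 statements merged into one kernel-verified Lean document; each statement's English description precedes it below -/
import Mathlib

section
/- Let 0 ≤ β < 2 and C > 0, and let g : ℂ → ℂ be measurable, vanishing almost everywhere outside the open unit disk Δ, with |g(z)| ≤ C·|z|^{−β} for almost every z ∈ Δ ∖ {0}. Let χ be a smooth function on ℂ with compact support contained in Δ, 0 ≤ χ ≤ 1, and ∫_ℂ χ dA = 1, and for n ∈ ℕ₊ set χ_n(z) := n²·χ(nz). Then there is a constant C₀, depending only on β, C and χ, such that for every n ∈ ℕ₊ and every z ≠ 0, |(g ∗ χ_n)(z)| ≤ C₀·|z|^{−β}, where (g ∗ χ_n)(z) := ∫_ℂ g(z−u)·χ_n(u) dA(u). -/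
open MeasureTheory Complex

section auxlemmas
open Metric Real Filter
open scoped ENNReal NNReal

lemma aux_msble (β : ℝ) : Measurable (fun w : ℂ => ‖w‖ ^ (-β)) := by fun_prop

lemma aux_integrableOn (β : ℝ) (hβ0 : 0 ≤ β) (hβ2 : β < 2) {r : ℝ} (hr : 0 < r) :
    IntegrableOn (fun w : ℂ => ‖w‖ ^ (-β)) (Metric.ball 0 r) volume := by
  set F : ℂ → ℝ := fun w => ‖w‖ ^ (-β) with hF
  set s : ℕ → Set ℂ := fun k => Metric.ball 0 (r / 2 ^ k) \ Metric.ball 0 (r / 2 ^ (k + 1)) with hs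
  have hrk : ∀ k : ℕ, (0:ℝ) < r / 2 ^ k := fun k => by positivity
  have hFnn : ∀ w : ℂ, 0 ≤ F w := fun w => Real.rpow_nonneg (norm_nonneg w) _
  have hmeas : ∀ k, MeasurableSet (s k) := fun k =>
    measurableSet_ball.diff measurableSet_ball
  -- pointwise bound on s k
  have hbd : ∀ k : ℕ, ∀ x ∈ s k, F x ≤ (r / 2 ^ (k+1)) ^ (-β) := by
    intro k x hx
    have hx2 : r / 2 ^ (k+1) ≤ ‖x‖ := by
      have := hx.2
      simp only [mem_ball_zero_iff, not_lt] at this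
      exact this
    exact Real.rpow_le_rpow_of_nonpos (hrk (k+1)) hx2 (neg_nonpos.2 hβ0)
  have hIk : ∀ k : ℕ, IntegrableOn F (s k) volume := by
    intro k
    refine Measure.integrableOn_of_bounded (M := (r / 2 ^ (k+1)) ^ (-β)) ?_ (aux_msble β).aestronglyMeasurable ?_
    · exact ((measure_mono (Set.diff_subset)).trans_lt measure_ball_lt_top).ne
    · refine (ae_restrict_iff' (hmeas k)).2 (Filter.Eventually.of_forall fun x hx => ?_)
      rw [Real.norm_of_nonneg (hFnn x)]
      exact hbd k x hx
  -- summability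
  have hvol : ∀ k : ℕ, (volume (s k)).toReal ≤ Real.pi * (r / 2 ^ k) ^ 2 := by
    intro k
    have h1 : volume (s k) ≤ volume (Metric.ball (0:ℂ) (r / 2 ^ k)) :=
      measure_mono Set.diff_subset
    have h2 : (volume (Metric.ball (0:ℂ) (r / 2 ^ k))).toReal = Real.pi * (r / 2 ^ k) ^ 2 := by
      rw [Complex.volume_ball, ENNReal.toReal_mul, ENNReal.toReal_pow,
        ENNReal.toReal_ofReal (hrk k).le, ENNReal.coe_toReal, NNReal.coe_real_pi, mul_comm]
    calc (volume (s k)).toReal ≤ (volume (Metric.ball (0:ℂ) (r / 2 ^ k))).toReal :=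
          ENNReal.toReal_mono measure_ball_lt_top.ne h1
      _ = _ := h2
  set q : ℝ := (2:ℝ) ^ (β - 2) with hq
  have hq0 : 0 ≤ q := Real.rpow_nonneg (by norm_num) _
  have hq1 : q < 1 := Real.rpow_lt_one_of_one_lt_of_neg one_lt_two (by linarith)
  have hterm : ∀ k : ℕ, (r / 2 ^ (k+1)) ^ (-β) * (Real.pi * (r / 2 ^ k) ^ 2)
      = ((2:ℝ) ^ β * Real.pi * r ^ (2 - β)) * q ^ k := by
    intro k
    have h2k : (0:ℝ) < (2:ℝ) ^ k := by positivity
    have hu : (0:ℝ) < r / 2 ^ k := hrk k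
    have e1 : r / 2 ^ (k+1) = (r / 2 ^ k) / 2 := by ring
    have e2 : ((r / 2 ^ k) / 2 : ℝ) ^ (-β) = (r / 2 ^ k) ^ (-β) * (2:ℝ) ^ β := by
      rw [Real.div_rpow hu.le (by norm_num), Real.rpow_neg (by norm_num : (0:ℝ) ≤ 2),
        div_inv_eq_mul]
    have e3 : (r / 2 ^ k : ℝ) ^ (-β) * (r / 2 ^ k) ^ 2 = (r / 2 ^ k) ^ (2 - β) := by
      rw [← Real.rpow_two, ← Real.rpow_add hu]
      ring_nf
    have e4 : (r / 2 ^ k : ℝ) ^ (2 - β) = r ^ (2 - β) * q ^ k := by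
      rw [Real.div_rpow hr.le h2k.le]
      have : ((2:ℝ) ^ k) ^ (2 - β) = ((2:ℝ) ^ (2 - β)) ^ k := by
        rw [← Real.rpow_natCast (2:ℝ) k, ← Real.rpow_mul (by norm_num),
          ← Real.rpow_natCast ((2:ℝ) ^ (2-β)) k, ← Real.rpow_mul (by norm_num)]
        ring_nf
      rw [this, hq]
      rw [div_eq_mul_inv, ← inv_pow, ← Real.rpow_neg_one ((2:ℝ) ^ (2 - β)),
        ← Real.rpow_mul (by norm_num), ← Real.rpow_natCast ((2:ℝ) ^ ((2-β) * -1)) k]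
      rw [← Real.rpow_natCast ((2:ℝ) ^ (β - 2)) k]
      ring_nf
    calc (r / 2 ^ (k+1)) ^ (-β) * (Real.pi * (r / 2 ^ k) ^ 2)
        = ((r / 2 ^ k) / 2) ^ (-β) * (Real.pi * (r / 2 ^ k) ^ 2) := by rw [e1]
      _ = Real.pi * ((2:ℝ) ^ β) * ((r / 2 ^ k) ^ (-β) * (r / 2 ^ k) ^ 2) := by rw [e2]; ring
      _ = Real.pi * ((2:ℝ) ^ β) * ((r / 2 ^ k) ^ (2 - β)) := by rw [e3]
      _ = _ := by rw [e4]; ring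
  have hsum : Summable fun k : ℕ => ∫ x in s k, ‖F x‖ := by
    refine Summable.of_nonneg_of_le (fun k => integral_nonneg fun x => norm_nonneg _)
      (fun k => ?_) (((summable_geometric_of_lt_one hq0 hq1).mul_left
        ((2:ℝ) ^ β * Real.pi * r ^ (2 - β))))
    have h1 : ‖∫ x in s k, ‖F x‖‖ ≤ (r / 2 ^ (k+1)) ^ (-β) * (volume (s k)).toReal := by
      refine norm_setIntegral_le_of_norm_le_const
        ((measure_mono Set.diff_subset).trans_lt measure_ball_lt_top) (fun x hx => ?_)
      rw [norm_norm, Real.norm_of_nonneg (hFnn x)]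
      exact hbd k x hx
    have h2 : ∫ x in s k, ‖F x‖ ≤ (r / 2 ^ (k+1)) ^ (-β) * (volume (s k)).toReal :=
      (le_abs_self _).trans (by rw [← Real.norm_eq_abs]; exact h1)
    refine h2.trans ?_
    rw [← hterm k]
    exact mul_le_mul_of_nonneg_left (hvol k) (Real.rpow_nonneg (hrk (k+1)).le _)
  -- covering
  have hcover : Metric.ball (0:ℂ) r ⊆ (⋃ k, s k) ∪ {0} := by
    intro x hx
    rcases eq_or_ne x 0 with rfl | hx0
    · exact Or.inr rfl
    · left
      have hxpos : 0 < ‖x‖ := norm_pos_iff.2 hx0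
      have hex : ∃ m : ℕ, r / 2 ^ (m+1) ≤ ‖x‖ := by
        obtain ⟨m, hm⟩ := exists_nat_gt (r / ‖x‖)
        refine ⟨m, ?_⟩
        have h2m : (r / ‖x‖ : ℝ) < 2 ^ (m+1) := by
          calc (r / ‖x‖ : ℝ) < m := hm
            _ ≤ 2 ^ m := by exact_mod_cast (Nat.lt_two_pow_self (n := m)).le
            _ ≤ 2 ^ (m+1) := by
              have : (2:ℝ) ^ m ≤ 2 ^ (m+1) := by
                apply pow_le_pow_right₀ (by norm_num) (by omega)
              exact this
        rw [div_le_iff₀ (by positivity : (0:ℝ) < 2 ^ (m+1))]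
        rw [div_lt_iff₀ hxpos] at h2m
        nlinarith
      have hk1 : r / 2 ^ (Nat.find hex + 1) ≤ ‖x‖ := Nat.find_spec hex
      have hk2 : ‖x‖ < r / 2 ^ (Nat.find hex) := by
        rcases Nat.eq_zero_or_pos (Nat.find hex) with h0 | hpos
        · rw [h0]; simpa using (mem_ball_zero_iff.1 hx)
        · have hmin := Nat.find_min hex (Nat.sub_lt hpos one_pos)
          push_neg at hmin
          have heq : Nat.find hex - 1 + 1 = Nat.find hex := Nat.succ_pred_eq_of_pos hpos
          rwa [heq] at hmin
      refine Set.mem_iUnion.2 ⟨Nat.find hex, ?_, ?_⟩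
      · exact mem_ball_zero_iff.2 hk2
      · simp only [mem_ball_zero_iff, not_lt]
        exact hk1
  have hU : IntegrableOn F ((⋃ k, s k) ∪ {0}) volume := by
    refine (integrableOn_iUnion_of_summable_integral_norm hIk hsum).union ?_
    rw [IntegrableOn, Measure.restrict_eq_zero.2 (by simp)]
    exact integrable_zero_measure
  exact hU.mono_set hcover

lemma aux_scale (β : ℝ) {r : ℝ} (hr : 0 < r) :
    ∫ w in Metric.ball (0:ℂ) r, ‖w‖ ^ (-β)
      = r ^ (2 - β) * ∫ w in Metric.ball (0:ℂ) 1, ‖w‖ ^ (-β) := by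
  set F : ℂ → ℝ := fun w => ‖w‖ ^ (-β) with hF
  set G : ℂ → ℝ := (Metric.ball (0:ℂ) r).indicator F with hG
  have key : ∫ x : ℂ, G (r • x) = |(r ^ Module.finrank ℝ ℂ)⁻¹| • ∫ x : ℂ, G x :=
    Measure.integral_comp_smul volume G r
  have h1 : (fun x : ℂ => G (r • x))
      = (Metric.ball (0:ℂ) 1).indicator (fun x => r ^ (-β) * F x) := by
    funext x
    by_cases hx : x ∈ Metric.ball (0:ℂ) 1
    · have hx1 : ‖x‖ < 1 := mem_ball_zero_iff.1 hx
      have hmem : r • x ∈ Metric.ball (0:ℂ) r := by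
        rw [mem_ball_zero_iff, norm_smul, Real.norm_of_nonneg hr.le]
        nlinarith [norm_nonneg x]
      rw [hG, Set.indicator_of_mem hmem, Set.indicator_of_mem hx]
      show ‖r • x‖ ^ (-β) = r ^ (-β) * ‖x‖ ^ (-β)
      rw [norm_smul, Real.norm_of_nonneg hr.le, Real.mul_rpow hr.le (norm_nonneg x)]
    · have hx1 : (1:ℝ) ≤ ‖x‖ := by
        have := mem_ball_zero_iff.not.1 hx
        push_neg at this; exact this
      have hmem' : r • x ∉ Metric.ball (0:ℂ) r := by
        rw [mem_ball_zero_iff, norm_smul, Real.norm_of_nonneg hr.le, not_lt]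
        nlinarith
      rw [hG, Set.indicator_of_notMem hmem', Set.indicator_of_notMem hx]
  have h2 : ∫ x : ℂ, G (r • x) = r ^ (-β) * ∫ w in Metric.ball (0:ℂ) 1, F w := by
    rw [h1, integral_indicator measurableSet_ball, integral_const_mul]
  have h3 : ∫ x : ℂ, G x = ∫ w in Metric.ball (0:ℂ) r, F w :=
    integral_indicator measurableSet_ball
  rw [h2, h3, Complex.finrank_real_complex, smul_eq_mul] at key
  have hr2 : |((r:ℝ) ^ 2)⁻¹| = (r ^ 2)⁻¹ := abs_of_pos (by positivity)
  rw [hr2] at key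
  have : ∫ w in Metric.ball (0:ℂ) r, F w = r ^ 2 * (r ^ (-β) * ∫ w in Metric.ball (0:ℂ) 1, F w) := by
    field_simp at key ⊢
    linarith [key]
  rw [this, ← mul_assoc]
  congr 1
  rw [← Real.rpow_two, ← Real.rpow_add hr]
  ring_nf

lemma aux_main (β C : ℝ) (hβ0 : 0 ≤ β) (hβ2 : β < 2) (hC : 0 < C)
    (g : ℂ → ℂ) (hgma : AEStronglyMeasurable g volume)
    (hgint : Integrable g volume)
    (hgbd : ∀ᵐ w : ℂ ∂volume, ‖g w‖ ≤ C * ‖w‖ ^ (-β))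
    (c : ℂ → ℝ) (hccont : Continuous c) (hcnn : ∀ u, 0 ≤ c u)
    {δ : ℝ} (hδ : 0 < δ)
    (hcle : ∀ u, c u ≤ 1 / δ ^ 2)
    (hcsupp : ∀ u, c u ≠ 0 → ‖u‖ < δ)
    (hcint : Integrable c volume) (hcval : ∫ u : ℂ, c u = 1)
    (aux_integrableOn : ∀ {r : ℝ}, 0 < r →
      IntegrableOn (fun w : ℂ => ‖w‖ ^ (-β)) (Metric.ball 0 r) volume)
    (aux_scale : ∀ {r : ℝ}, 0 < r → ∫ w in Metric.ball (0:ℂ) r, ‖w‖ ^ (-β)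
      = r ^ (2 - β) * ∫ w in Metric.ball (0:ℂ) 1, ‖w‖ ^ (-β))
    (z : ℂ) (hz : z ≠ 0) :
    Integrable (fun u : ℂ => g (z - u) * ((c u : ℝ) : ℂ)) volume ∧
    ‖∫ u : ℂ, g (z - u) * ((c u : ℝ) : ℂ)‖ ≤
      (C * 2 ^ β * (1 + 3 ^ (2 - β) * ∫ w in Metric.ball (0:ℂ) 1, ‖w‖ ^ (-β))) * ‖z‖ ^ (-β) := by
  have hFnn : ∀ w : ℂ, 0 ≤ ‖w‖ ^ (-β) := fun w => Real.rpow_nonneg (norm_nonneg w) _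
  set I : ℝ := ∫ w in Metric.ball (0:ℂ) 1, ‖w‖ ^ (-β) with hIdef
  have hInn : 0 ≤ I := setIntegral_nonneg measurableSet_ball fun w _ => hFnn w
  have h2β : (0:ℝ) < 2 ^ β := Real.rpow_pos_of_pos two_pos β
  have h3β : (0:ℝ) < 3 ^ (2 - β) := Real.rpow_pos_of_pos (by norm_num) _
  have hznorm : 0 < ‖z‖ := norm_pos_iff.2 hz
  have hX : (0:ℝ) < ‖z‖ ^ (-β) := Real.rpow_pos_of_pos hznorm _
  -- integrability of the integrand
  have hgz : Integrable (fun u : ℂ => g (z - u)) volume := hgint.comp_sub_left z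
  have hintgr : Integrable (fun u : ℂ => g (z - u) * ((c u : ℝ) : ℂ)) volume := by
    have hb : ∃ B, ∀ u : ℂ, ‖((c u : ℝ) : ℂ)‖ ≤ B :=
      ⟨1 / δ ^ 2, fun u => by
        rw [Complex.norm_real, Real.norm_of_nonneg (hcnn u)]; exact hcle u⟩
    have h := hgz.bdd_mul (Complex.continuous_ofReal.comp hccont).aestronglyMeasurable (ae_of_all _ hb.choose_spec)
    have hcomm : (fun u : ℂ => g (z - u) * ((c u : ℝ) : ℂ))
      = fun u : ℂ => ((c u : ℝ) : ℂ) * g (z - u) := by funext u; ring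
    rw [hcomm]; exact h
  refine ⟨hintgr, ?_⟩
  have hstep1 : ‖∫ u : ℂ, g (z - u) * ((c u : ℝ) : ℂ)‖ ≤ ∫ u : ℂ, ‖g (z - u)‖ * c u := by
    refine (norm_integral_le_integral_norm _).trans_eq ?_
    congr 1; funext u
    rw [norm_mul, Complex.norm_real, Real.norm_of_nonneg (hcnn u)]
  have hae : ∀ᵐ u : ℂ ∂volume, ‖g (z - u)‖ ≤ C * ‖z - u‖ ^ (-β) :=
    (Measure.measurePreserving_sub_left volume z).quasiMeasurePreserving.ae hgbd
  by_cases hcase : 2 * δ ≤ ‖z‖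
  · -- z away from origin
    have hptw : ∀ᵐ u : ℂ ∂volume,
        ‖g (z - u)‖ * c u ≤ (C * (2 ^ β * ‖z‖ ^ (-β))) * c u := by
      filter_upwards [hae] with u hu
      rcases (hcnn u).eq_or_lt with hc0 | hcpos
      · rw [← hc0, mul_zero, mul_zero]
      · have hun : ‖u‖ < δ := hcsupp u (ne_of_gt hcpos)
        have hzu : ‖z‖ / 2 ≤ ‖z - u‖ := by
          have h1 : ‖z‖ - ‖u‖ ≤ ‖z - u‖ := norm_sub_norm_le z u
          linarith
        have hFle : ‖z - u‖ ^ (-β) ≤ 2 ^ β * ‖z‖ ^ (-β) := by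
          have h1 : ‖z - u‖ ^ (-β) ≤ (‖z‖ / 2) ^ (-β) :=
            Real.rpow_le_rpow_of_nonpos (by positivity) hzu (neg_nonpos.2 hβ0)
          have h2 : ((‖z‖ / 2 : ℝ)) ^ (-β) = ‖z‖ ^ (-β) * 2 ^ β := by
            rw [Real.div_rpow (norm_nonneg z) (by norm_num),
              Real.rpow_neg (by norm_num : (0:ℝ) ≤ 2), div_inv_eq_mul]
          rw [h2] at h1; linarith
        calc ‖g (z - u)‖ * c u ≤ (C * ‖z - u‖ ^ (-β)) * c u :=
              mul_le_mul_of_nonneg_right hu (hcnn u)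
          _ ≤ (C * (2 ^ β * ‖z‖ ^ (-β))) * c u := by
              refine mul_le_mul_of_nonneg_right ?_ (hcnn u)
              nlinarith
    have hle2 : ∫ u : ℂ, ‖g (z - u)‖ * c u
        ≤ ∫ u : ℂ, (C * (2 ^ β * ‖z‖ ^ (-β))) * c u :=
      integral_mono_of_nonneg
        (Eventually.of_forall fun u => mul_nonneg (norm_nonneg _) (hcnn u))
        (hcint.const_mul _) hptw
    have hval : ∫ u : ℂ, (C * (2 ^ β * ‖z‖ ^ (-β))) * c u = C * (2 ^ β * ‖z‖ ^ (-β)) := by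
      rw [integral_const_mul, hcval, mul_one]
    rw [hval] at hle2
    refine (hstep1.trans hle2).trans ?_
    nlinarith [mul_nonneg (mul_nonneg (mul_nonneg (mul_nonneg hC.le h2β.le) h3β.le) hInn) hX.le]
  · -- z close to origin
    push_neg at hcase
    have h3δ : (0:ℝ) < 3 * δ := by linarith
    set G : ℂ → ℝ := (Metric.ball (0:ℂ) (3 * δ)).indicator (fun w => ‖w‖ ^ (-β)) with hGdef
    have hGnn : ∀ w, 0 ≤ G w := fun w => Set.indicator_nonneg (fun w _ => hFnn w) w
    have hGint : Integrable G volume :=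
      (aux_integrableOn h3δ).integrable_indicator measurableSet_ball
    have hmaj : Integrable (fun u : ℂ => (C / δ ^ 2) * G (z - u)) volume :=
      (hGint.comp_sub_left z).const_mul _
    have hptw : ∀ᵐ u : ℂ ∂volume, ‖g (z - u)‖ * c u ≤ (C / δ ^ 2) * G (z - u) := by
      filter_upwards [hae] with u hu
      rcases (hcnn u).eq_or_lt with hc0 | hcpos
      · rw [← hc0, mul_zero]
        exact mul_nonneg (by positivity) (hGnn _)
      · have hun : ‖u‖ < δ := hcsupp u (ne_of_gt hcpos)
        have hmem : z - u ∈ Metric.ball (0:ℂ) (3 * δ) := by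
          rw [mem_ball_zero_iff]
          calc ‖z - u‖ ≤ ‖z‖ + ‖u‖ := norm_sub_le z u
            _ < 2 * δ + δ := by linarith
            _ = 3 * δ := by ring
        have hGeq : G (z - u) = ‖z - u‖ ^ (-β) := Set.indicator_of_mem hmem _
        calc ‖g (z - u)‖ * c u ≤ (C * ‖z - u‖ ^ (-β)) * c u :=
              mul_le_mul_of_nonneg_right hu (hcnn u)
          _ ≤ (C * ‖z - u‖ ^ (-β)) * (1 / δ ^ 2) :=
              mul_le_mul_of_nonneg_left (hcle u) (mul_nonneg hC.le (hFnn _))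
          _ = (C / δ ^ 2) * G (z - u) := by rw [hGeq]; ring
    have hle2 : ∫ u : ℂ, ‖g (z - u)‖ * c u ≤ ∫ u : ℂ, (C / δ ^ 2) * G (z - u) :=
      integral_mono_of_nonneg
        (Eventually.of_forall fun u => mul_nonneg (norm_nonneg _) (hcnn u))
        hmaj hptw
    have hval : ∫ u : ℂ, (C / δ ^ 2) * G (z - u) = (C / δ ^ 2) * ((3 * δ) ^ (2 - β) * I) := by
      rw [integral_const_mul, integral_sub_left_eq_self G volume z, hGdef,
        integral_indicator measurableSet_ball, aux_scale h3δ]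
    rw [hval] at hle2
    -- numeric estimate
    have hkey : (1 / δ ^ 2) * (3 * δ) ^ (2 - β) = 3 ^ (2 - β) * δ ^ (-β) := by
      have e1 : ((3:ℝ) * δ) ^ (2 - β) = 3 ^ (2 - β) * δ ^ (2 - β) :=
        Real.mul_rpow (by norm_num) hδ.le
      have e2 : (δ:ℝ) ^ (-β) = δ ^ (2 - β) / δ ^ 2 := by
        rw [← Real.rpow_two, ← Real.rpow_sub hδ]; norm_num
      rw [e1, e2]; ring
    have hnβ : δ ^ (-β) ≤ 2 ^ β * ‖z‖ ^ (-β) := by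
      have h2 : (2 * δ) ^ (-β) ≤ ‖z‖ ^ (-β) :=
        Real.rpow_le_rpow_of_nonpos hznorm hcase.le (neg_nonpos.2 hβ0)
      have h3 : ((2 * δ : ℝ)) ^ (-β) = 2 ^ (-β) * δ ^ (-β) :=
        Real.mul_rpow (by norm_num) hδ.le
      have h5 : (2:ℝ) ^ β * (2:ℝ) ^ (-β) = 1 := by
        rw [← Real.rpow_add two_pos]; simp
      calc δ ^ (-β) = 2 ^ β * ((2 * δ) ^ (-β)) := by
            rw [h3, ← mul_assoc, h5, one_mul]
        _ ≤ 2 ^ β * ‖z‖ ^ (-β) := mul_le_mul_of_nonneg_left h2 h2β.le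
    have e : (C / δ ^ 2) * ((3 * δ) ^ (2 - β) * I) = C * (3 ^ (2 - β) * δ ^ (-β)) * I := by
      rw [← hkey]; ring
    rw [e] at hle2
    refine (hstep1.trans hle2).trans ?_
    have hb : C * (3 ^ (2 - β) * δ ^ (-β)) * I ≤ C * (3 ^ (2 - β) * (2 ^ β * ‖z‖ ^ (-β))) * I :=
      mul_le_mul_of_nonneg_right
        (mul_le_mul_of_nonneg_left (mul_le_mul_of_nonneg_left hnβ h3β.le) hC.le) hInn
    refine hb.trans ?_
    nlinarith [mul_pos (mul_pos hC h2β) hX]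

end auxlemmas

/-- uniform bound for mollifications: if `g` vanishes a.e. outside the unit disk
and `|g(z)| ≤ C|z|^{−β}` a.e. (`0 ≤ β < 2`), then the mollifications `g ∗ χ_n` with
`χ_n(z) = n²χ(nz)` satisfy `|(g ∗ χ_n)(z)| ≤ C₀|z|^{−β}` for all `n ≥ 1` and `z ≠ 0`,
with `C₀` independent of `n`. -/
theorem stmt_9 (β C : ℝ) (hβ0 : 0 ≤ β) (hβ2 : β < 2) (hC : 0 < C)
    (g : ℂ → ℂ) (hmeas : Measurable g)
    (hsupp : ∀ᵐ z : ℂ ∂volume, z ∉ Metric.ball (0 : ℂ) 1 → g z = 0)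
    (hbound : ∀ᵐ z : ℂ ∂volume, z ∈ Metric.ball (0 : ℂ) 1 → z ≠ 0 →
      ‖g z‖ ≤ C * ‖z‖ ^ (-β))
    (χ : ℂ → ℝ) (hχsm : ContDiff ℝ (⊤ : ℕ∞) χ) (hχcs : HasCompactSupport χ)
    (hχsupp : tsupport χ ⊆ Metric.ball (0 : ℂ) 1)
    (hχ01 : ∀ z : ℂ, 0 ≤ χ z ∧ χ z ≤ 1)
    (hχint : ∫ z : ℂ, χ z = 1) :
    ∃ C₀ : ℝ, 0 < C₀ ∧ ∀ n : ℕ, 0 < n → ∀ z : ℂ, z ≠ 0 →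
      Integrable (fun u : ℂ => g (z - u) * (((n : ℝ) ^ 2 * χ ((n : ℂ) * u) : ℝ) : ℂ)) volume ∧
      ‖∫ u : ℂ, g (z - u) * (((n : ℝ) ^ 2 * χ ((n : ℂ) * u) : ℝ) : ℂ)‖ ≤
        C₀ * ‖z‖ ^ (-β) := by
  have hFnn : ∀ w : ℂ, 0 ≤ ‖w‖ ^ (-β) := fun w => Real.rpow_nonneg (norm_nonneg w) _
  have h0 : ∀ᵐ w : ℂ ∂volume, w ≠ 0 := by
    rw [MeasureTheory.ae_iff]
    simpa using measure_singleton (0 : ℂ)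
  -- a.e. global bound for g
  have hgbd : ∀ᵐ w : ℂ ∂volume, ‖g w‖ ≤ C * ‖w‖ ^ (-β) := by
    filter_upwards [hsupp, hbound, h0] with w hw1 hw2 hw0
    by_cases hw : w ∈ Metric.ball (0 : ℂ) 1
    · have h := hw2 hw hw0
      exact h
    · rw [hw1 hw, norm_zero]
      exact mul_nonneg hC.le (hFnn w)
  -- g is integrable
  have hgint : Integrable g volume := by
    refine Integrable.mono'
      (IntegrableOn.integrable_indicator
        ((aux_integrableOn β hβ0 hβ2 one_pos).const_mul C)
        measurableSet_ball) hmeas.aestronglyMeasurable ?_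
    filter_upwards [hsupp, hbound, h0] with w hw1 hw2 hw0
    by_cases hw : w ∈ Metric.ball (0 : ℂ) 1
    · rw [Set.indicator_of_mem hw]
      have h := hw2 hw hw0
      exact h
    · rw [Set.indicator_of_notMem hw, hw1 hw, norm_zero]
  set I : ℝ := ∫ w in Metric.ball (0 : ℂ) 1, ‖w‖ ^ (-β) with hIdef
  have hInn : 0 ≤ I := setIntegral_nonneg measurableSet_ball fun w _ => hFnn w
  have h2β : (0 : ℝ) < 2 ^ β := Real.rpow_pos_of_pos two_pos β
  have h3β : (0 : ℝ) < 3 ^ (2 - β) := Real.rpow_pos_of_pos (by norm_num) _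
  refine ⟨C * 2 ^ β * (1 + 3 ^ (2 - β) * I), by
    nlinarith [mul_pos hC h2β, mul_nonneg (mul_pos hC h2β).le (mul_nonneg h3β.le hInn)], ?_⟩
  intro n hn z hz
  have hnR : (0 : ℝ) < n := by exact_mod_cast hn
  set c : ℂ → ℝ := fun u => (n : ℝ) ^ 2 * χ ((n : ℂ) * u) with hcdef
  have hceq : ∀ u : ℂ, ((n : ℝ) • u : ℂ) = (n : ℂ) * u := by
    intro u; rw [Complex.real_smul, Complex.ofReal_natCast]
  have hccont : Continuous c :=
    continuous_const.mul (hχsm.continuous.comp (continuous_const.mul continuous_id))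
  have hcnn : ∀ u : ℂ, 0 ≤ c u := fun u => mul_nonneg (by positivity) (hχ01 _).1
  have hδ : (0 : ℝ) < 1 / n := by positivity
  have hcle : ∀ u : ℂ, c u ≤ 1 / (1 / (n : ℝ)) ^ 2 := by
    intro u
    have h1 : (1 : ℝ) / (1 / (n : ℝ)) ^ 2 = (n : ℝ) ^ 2 := by field_simp
    rw [h1]
    show (n : ℝ) ^ 2 * χ ((n : ℂ) * u) ≤ (n : ℝ) ^ 2
    nlinarith [(hχ01 ((n : ℂ) * u)).2, (hχ01 ((n : ℂ) * u)).1, sq_nonneg (n : ℝ)]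
  have hcsupp : ∀ u : ℂ, c u ≠ 0 → ‖u‖ < 1 / n := by
    intro u hu
    have hχne : χ ((n : ℂ) * u) ≠ 0 := by
      intro h; apply hu; rw [hcdef]; simp [h]
    have hmem : (n : ℂ) * u ∈ Metric.ball (0 : ℂ) 1 :=
      hχsupp (subset_tsupport χ hχne)
    have h1 : ‖(n : ℂ) * u‖ < 1 := mem_ball_zero_iff.1 hmem
    rw [norm_mul, Complex.norm_natCast] at h1
    rw [lt_div_iff₀ hnR, mul_comm]
    exact h1
  have hccs : HasCompactSupport c := by
    refine HasCompactSupport.intro (isCompact_closedBall (0 : ℂ) (1 / n)) fun x hx => ?_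
    by_contra hcx
    exact hx (Metric.mem_closedBall.2 (by simpa using (hcsupp x hcx).le))
  have hcint : Integrable c volume := hccont.integrable_of_hasCompactSupport hccs
  have hcval : ∫ u : ℂ, c u = 1 := by
    have h1 : ∫ u : ℂ, χ ((n : ℝ) • u)
        = |(((n : ℝ)) ^ Module.finrank ℝ ℂ)⁻¹| • ∫ x : ℂ, χ x :=
      Measure.integral_comp_smul volume χ (n : ℝ)
    rw [hχint, Complex.finrank_real_complex, smul_eq_mul, mul_one,
      abs_of_pos (by positivity)] at h1
    have h2 : ∫ u : ℂ, c u = (n : ℝ) ^ 2 * ∫ u : ℂ, χ ((n : ℝ) • u) := by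
      rw [← integral_const_mul]
      apply integral_congr_ae
      filter_upwards with u
      simp only [hcdef, hceq]
    rw [h2, h1]
    field_simp
  have key := aux_main β C hβ0 hβ2 hC g hmeas.aestronglyMeasurable hgint hgbd
    c hccont hcnn hδ hcle hcsupp hcint hcval
    (fun {r} hr => aux_integrableOn β hβ0 hβ2 hr)
    (fun {r} hr => aux_scale β hr) z hz
  refine ⟨key.1, ?_⟩
  exact key.2
end

section
/- In the flat-cone setup: for each k ∈ {0, …, n−2} there exist constants C, r > 0 such that |a(z)| ≤ C·|z − z_k|^{2α_k − 1} for all z with 0 < |z − z_k| < r; and there exist constants C′, R > 0 such that |a(z)| ≤ C′·|z|^{1 − 2α_{n−1}} for all z with |z| ≥ R. -/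
/-!
Near a finite puncture `z_k` the term `ρ_k / (z - z_k)` dominates `ψ`, since the other punctures
are at distance at least `1`, while the remaining factors of the product stay bounded. Near `∞`
the two moment conditions on `ρ` give `ψ(z) = O(|z|⁻³)`, and the product grows at most like
`|z| ^ (Σ_{k ≤ n-2} 2α_k) = |z| ^ (4 - 2α_{n-1})`.
-/

open MeasureTheory Complex

/-- An integrable holomorphic quadratic differential coefficient
`ψ(z) = Σ_{k=0}^{n−2} ρ_k/(z − z_k)` with marked points `z_k = k`. -/
noncomputable def psiQ (n : ℕ) (ρ : ℕ → ℂ) (z : ℂ) : ℂ :=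
  ∑ k ∈ Finset.range (n - 1), ρ k / (z - (k : ℂ))

/-- `a(z) = conj(ψ(z)) · ∏_{k=0}^{n−2} |z − z_k|^{2α_k}` in the flat-cone setup. -/
noncomputable def acone (n : ℕ) (α : ℕ → ℝ) (ρ : ℕ → ℂ) (z : ℂ) : ℂ :=
  (starRingEnd ℂ) (psiQ n ρ z) *
    ((∏ k ∈ Finset.range (n - 1), ‖z - (k : ℂ)‖ ^ (2 * α k) : ℝ) : ℂ)

open Finset

theorem one_le_norm_natCast_sub_natCast {j k : ℕ} (h : j ≠ k) : 1 ≤ ‖(j : ℂ) - k‖ := by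
  have hjk : (j : ℤ) - k ≠ 0 := sub_ne_zero.mpr (by exact_mod_cast h)
  have hcast : (j : ℂ) - k = (((j : ℤ) - k : ℤ) : ℂ) := by push_cast; rfl
  rw [hcast, Complex.norm_intCast]
  exact_mod_cast Int.one_le_abs hjk

theorem norm_sum_div_sub_le {ι : Type*} (s : Finset ι) (ρ w : ι → ℂ) {z : ℂ} {d : ℝ}
    (hd : 0 < d) (h : ∀ j ∈ s, d ≤ ‖z - w j‖) :
    ‖∑ j ∈ s, ρ j / (z - w j)‖ ≤ (∑ j ∈ s, ‖ρ j‖) / d := by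
  rw [sum_div]
  refine (norm_sum_le _ _).trans (sum_le_sum fun j hj => ?_)
  rw [norm_div]
  exact div_le_div_of_nonneg_left (norm_nonneg _) hd (h j hj)

/-- Expanding `1/(z - w) = 1/z + w/z² + w²/((z - w) z²)`, the two vanishing moments kill the
first two terms. -/
theorem sum_div_sub_eq_of_moments {ι : Type*} (s : Finset ι) (ρ w : ι → ℂ) {z : ℂ}
    (hz : z ≠ 0) (hzw : ∀ j ∈ s, z ≠ w j)
    (h0 : ∑ j ∈ s, ρ j = 0) (h1 : ∑ j ∈ s, ρ j * w j = 0) :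
    ∑ j ∈ s, ρ j / (z - w j) = (∑ j ∈ s, ρ j * w j ^ 2 / (z - w j)) / z ^ 2 := by
  have expand : ∀ j ∈ s, ρ j / (z - w j) =
      ρ j / z + ρ j * w j / z ^ 2 + ρ j * w j ^ 2 / (z - w j) / z ^ 2 := by
    intro j hj
    have := sub_ne_zero.mpr (hzw j hj)
    field_simp
    ring
  rw [sum_congr rfl expand, sum_add_distrib, sum_add_distrib, ← sum_div, ← sum_div, ← sum_div,
    h0, h1]
  simp

theorem prod_rpow_le_rpow_sum {ι : Type*} (s : Finset ι) {x p : ι → ℝ} {A : ℝ} (hA : 0 < A)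
    (hx : ∀ j ∈ s, 0 ≤ x j ∧ x j ≤ A) (hp : ∀ j ∈ s, 0 ≤ p j) :
    ∏ j ∈ s, x j ^ p j ≤ A ^ ∑ j ∈ s, p j := by
  rw [Real.rpow_sum_of_pos hA]
  exact prod_le_prod (fun j hj => Real.rpow_nonneg (hx j hj).1 _)
    fun j hj => Real.rpow_le_rpow (hx j hj).1 (hx j hj).2 (hp j hj)

theorem norm_acone (n : ℕ) (α : ℕ → ℝ) (ρ : ℕ → ℂ) (z : ℂ) :
    ‖acone n α ρ z‖ = ‖psiQ n ρ z‖ * ∏ j ∈ range (n - 1), ‖z - j‖ ^ (2 * α j) := by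
  rw [acone, norm_mul, Complex.norm_conj, Complex.norm_real, Real.norm_of_nonneg]
  exact prod_nonneg fun j _ => Real.rpow_nonneg (norm_nonneg _) _

theorem norm_psiQ_le_near_puncture {n k : ℕ} (ρ : ℕ → ℂ) {z : ℂ}
    (hz0 : 0 < ‖z - k‖) (hz : ‖z - k‖ < 1 / 2) :
    ‖psiQ n ρ z‖ ≤ (∑ j ∈ range (n - 1), ‖ρ j‖) / ‖z - k‖ := by
  refine norm_sum_div_sub_le _ ρ (fun j => (j : ℂ)) hz0 fun j _ => ?_
  rcases eq_or_ne j k with rfl | hjk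
  · rfl
  · have hsep := one_le_norm_natCast_sub_natCast hjk
    have htri := norm_sub_le_norm_sub_add_norm_sub (j : ℂ) z k
    rw [norm_sub_rev (j : ℂ) z] at htri
    linarith

theorem norm_psiQ_le_at_infinity {n : ℕ} {ρ : ℕ → ℂ}
    (hρ0 : ∑ j ∈ range (n - 1), ρ j = 0) (hρ1 : ∑ j ∈ range (n - 1), ρ j * j = 0)
    {z : ℂ} (hz0 : 0 < ‖z‖) (hz : 2 * n ≤ ‖z‖) :
    ‖psiQ n ρ z‖ ≤ 2 * (∑ j ∈ range (n - 1), ‖ρ j‖ * j ^ 2) / ‖z‖ ^ 3 := by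
  have hfar : ∀ j ∈ range (n - 1), ‖z‖ / 2 ≤ ‖z - j‖ := fun j hj => by
    have hjn : (j : ℝ) ≤ n := by exact_mod_cast (mem_range.mp hj).le.trans (n.sub_le 1)
    have htri := norm_sub_norm_le z (j : ℂ)
    rw [Complex.norm_natCast] at htri
    linarith
  have hne : ∀ j ∈ range (n - 1), z ≠ j := fun j hj =>
    sub_ne_zero.mp (norm_pos_iff.mp ((half_pos hz0).trans_le (hfar j hj)))
  rw [psiQ, sum_div_sub_eq_of_moments _ ρ (fun j => (j : ℂ)) (norm_pos_iff.mp hz0) hne hρ0 hρ1,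
    norm_div, norm_pow]
  calc ‖∑ j ∈ range (n - 1), ρ j * (j : ℂ) ^ 2 / (z - j)‖ / ‖z‖ ^ 2
      ≤ (∑ j ∈ range (n - 1), ‖ρ j * (j : ℂ) ^ 2‖) / (‖z‖ / 2) / ‖z‖ ^ 2 := by
        gcongr
        exact norm_sum_div_sub_le (range (n - 1)) _ (fun j => (j : ℂ)) (half_pos hz0) hfar
    _ = 2 * (∑ j ∈ range (n - 1), ‖ρ j‖ * j ^ 2) / ‖z‖ ^ 3 := by
        simp only [norm_mul, norm_pow, Complex.norm_natCast]
        field_simp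

theorem acone_bound_near_puncture {n : ℕ} {α : ℕ → ℝ} (hα : ∀ j < n - 1, 0 ≤ α j)
    (ρ : ℕ → ℂ) {k : ℕ} (hk : k < n - 1) :
    ∃ C r : ℝ, 0 < C ∧ 0 < r ∧ ∀ z : ℂ, 0 < ‖z - k‖ → ‖z - k‖ < r →
      ‖acone n α ρ z‖ ≤ C * ‖z - k‖ ^ (2 * α k - 1) := by
  set B := ∑ j ∈ range (n - 1), ‖ρ j‖
  set S := ∑ j ∈ (range (n - 1)).erase k, 2 * α j
  have hB : 0 ≤ B := sum_nonneg fun j _ => norm_nonneg _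
  have hn : (0 : ℝ) < n := by exact_mod_cast (show 0 < n by omega)
  refine ⟨(B + 1) * (2 * n) ^ S, 1 / 2, by positivity, by norm_num, fun z hz0 hz => ?_⟩
  have hrest : ∏ j ∈ (range (n - 1)).erase k, ‖z - j‖ ^ (2 * α j) ≤ (2 * n) ^ S := by
    refine prod_rpow_le_rpow_sum _ (by positivity) (fun j hj => ⟨norm_nonneg _, ?_⟩)
      fun j hj => by have := hα j (mem_range.mp (mem_of_mem_erase hj)); positivity
    have hj : (j : ℝ) + 1 ≤ n := by
      exact_mod_cast (show j + 1 ≤ n by have := mem_range.mp (mem_of_mem_erase hj); omega)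
    have hk' : (k : ℝ) + 1 ≤ n := by exact_mod_cast (show k + 1 ≤ n by omega)
    have htri := norm_sub_le_norm_sub_add_norm_sub z (k : ℂ) j
    have hkj := norm_sub_le (k : ℂ) j
    rw [Complex.norm_natCast, Complex.norm_natCast] at hkj
    linarith
  calc ‖acone n α ρ z‖
      = ‖psiQ n ρ z‖ * (‖z - k‖ ^ (2 * α k) *
          ∏ j ∈ (range (n - 1)).erase k, ‖z - j‖ ^ (2 * α j)) := by
        rw [norm_acone, ← mul_prod_erase _ _ (mem_range.mpr hk)]
    _ ≤ B / ‖z - k‖ * (‖z - k‖ ^ (2 * α k) * (2 * n) ^ S) := by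
        gcongr
        exact norm_psiQ_le_near_puncture ρ hz0 hz
    _ = B * (2 * n) ^ S * ‖z - k‖ ^ (2 * α k - 1) := by
        rw [Real.rpow_sub_one hz0.ne']
        ring
    _ ≤ (B + 1) * (2 * n) ^ S * ‖z - k‖ ^ (2 * α k - 1) := by
        gcongr
        linarith

theorem acone_bound_at_infinity {n : ℕ} {α : ℕ → ℝ} (hα : ∀ j < n - 1, 0 ≤ α j)
    (hsum : ∑ j ∈ range n, α j = 2) {ρ : ℕ → ℂ}
    (hρ0 : ∑ j ∈ range (n - 1), ρ j = 0) (hρ1 : ∑ j ∈ range (n - 1), ρ j * j = 0) :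
    ∃ C' R : ℝ, 0 < C' ∧ 0 < R ∧ ∀ z : ℂ, R ≤ ‖z‖ →
      ‖acone n α ρ z‖ ≤ C' * ‖z‖ ^ (1 - 2 * α (n - 1)) := by
  have hn : n ≠ 0 := by rintro rfl; simp at hsum
  have hexp : ∑ j ∈ range (n - 1), 2 * α j = 4 - 2 * α (n - 1) := by
    have hsplit := sum_range_succ α (n - 1)
    rw [Nat.sub_add_cancel (Nat.one_le_iff_ne_zero.mpr hn), hsum] at hsplit
    rw [← mul_sum]
    linarith
  set D := ∑ j ∈ range (n - 1), ‖ρ j‖ * j ^ 2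
  have hD : 0 ≤ D := sum_nonneg fun j _ => by positivity
  have hnpos : (0 : ℝ) < 2 * n := by positivity
  refine ⟨2 * (D + 1) * 2 ^ (4 - 2 * α (n - 1)), 2 * n, by positivity, hnpos, fun z hz => ?_⟩
  have hz0 : 0 < ‖z‖ := hnpos.trans_le hz
  have hprod : ∏ j ∈ range (n - 1), ‖z - j‖ ^ (2 * α j) ≤ (2 * ‖z‖) ^ (4 - 2 * α (n - 1)) := by
    rw [← hexp]
    refine prod_rpow_le_rpow_sum _ (by positivity) (fun j hj => ⟨norm_nonneg _, ?_⟩)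
      fun j hj => by have := hα j (mem_range.mp hj); positivity
    have hjn : (j : ℝ) ≤ n := by exact_mod_cast (mem_range.mp hj).le.trans (n.sub_le 1)
    have htri := norm_sub_le z (j : ℂ)
    rw [Complex.norm_natCast] at htri
    linarith
  have hpow : ‖z‖ ^ (4 - 2 * α (n - 1)) = ‖z‖ ^ (1 - 2 * α (n - 1)) * ‖z‖ ^ 3 := by
    rw [← Real.rpow_add_natCast hz0.ne']
    norm_num
    ring_nf
  calc ‖acone n α ρ z‖
      = ‖psiQ n ρ z‖ * ∏ j ∈ range (n - 1), ‖z - j‖ ^ (2 * α j) := norm_acone n α ρ z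
    _ ≤ 2 * D / ‖z‖ ^ 3 * (2 * ‖z‖) ^ (4 - 2 * α (n - 1)) := by
        gcongr
        exact norm_psiQ_le_at_infinity hρ0 hρ1 hz0 hz
    _ = 2 * D * 2 ^ (4 - 2 * α (n - 1)) * ‖z‖ ^ (1 - 2 * α (n - 1)) := by
        rw [Real.mul_rpow zero_le_two hz0.le, hpow]
        field_simp
    _ ≤ 2 * (D + 1) * 2 ^ (4 - 2 * α (n - 1)) * ‖z‖ ^ (1 - 2 * α (n - 1)) := by
        gcongr
        linarith

theorem stmt_16_general (n : ℕ) (α : ℕ → ℝ)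
    (hα : ∀ k < n, 0 < α k ∧ α k < 1)
    (hsum : ∑ k ∈ Finset.range n, α k = 2)
    (ρ : ℕ → ℂ)
    (hρ0 : ∑ k ∈ Finset.range (n - 1), ρ k = 0)
    (hρ1 : ∑ k ∈ Finset.range (n - 1), ρ k * (k : ℂ) = 0) :
    (∀ k < n - 1, ∃ C r : ℝ, 0 < C ∧ 0 < r ∧
      ∀ z : ℂ, 0 < ‖z - (k : ℂ)‖ → ‖z - (k : ℂ)‖ < r →
        ‖acone n α ρ z‖ ≤ C * ‖z - (k : ℂ)‖ ^ (2 * α k - 1)) ∧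
    (∃ C' R : ℝ, 0 < C' ∧ 0 < R ∧
      ∀ z : ℂ, R ≤ ‖z‖ →
        ‖acone n α ρ z‖ ≤ C' * ‖z‖ ^ (1 - 2 * α (n - 1))) := by
  have hα0 : ∀ j < n - 1, 0 ≤ α j := fun j hj => (hα j (by omega)).1.le
  exact ⟨fun k hk => acone_bound_near_puncture hα0 ρ hk,
    acone_bound_at_infinity hα0 hsum hρ0 hρ1⟩

/-- in the flat-cone setup, `|a(z)| = O(|z − z_k|^{2α_k − 1})` near each
puncture `z_k` (`k ≤ n−2`), and `|a(z)| = O(|z|^{1 − 2α_{n−1}})` as `z → ∞`. -/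
theorem stmt_16 (n : ℕ) (hn : 3 < n) (α : ℕ → ℝ)
    (hα : ∀ k < n, 0 < α k ∧ α k < 1)
    (hsum : ∑ k ∈ Finset.range n, α k = 2)
    (ρ : ℕ → ℂ)
    (hρ0 : ∑ k ∈ Finset.range (n - 1), ρ k = 0)
    (hρ1 : ∑ k ∈ Finset.range (n - 1), ρ k * (k : ℂ) = 0) :
    (∀ k < n - 1, ∃ C r : ℝ, 0 < C ∧ 0 < r ∧
      ∀ z : ℂ, 0 < ‖z - (k : ℂ)‖ → ‖z - (k : ℂ)‖ < r →
        ‖acone n α ρ z‖ ≤ C * ‖z - (k : ℂ)‖ ^ (2 * α k - 1)) ∧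
    (∃ C' R : ℝ, 0 < C' ∧ 0 < R ∧
      ∀ z : ℂ, R ≤ ‖z‖ →
        ‖acone n α ρ z‖ ≤ C' * ‖z‖ ^ (1 - 2 * α (n - 1))) :=
  stmt_16_general n α hα hsum ρ hρ0 hρ1
end
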